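/- arXiv:2412.10828 — 3 statements merged into one kernel-verified Lean document; each statement's English description precedes it below -/
import Mathlib

section
/- Positivity preservation for classical solutions of the Vlasov equation: Let d ≥ 1 be an integer and T > 0. Let u : [0,T] × ℝ^d → ℝ^d be continuous and bounded, and suppose there is K > 0 such that ‖u(t,x) − u(t,y)‖ ≤ K‖x − y‖ for all t ∈ [0,T] and x, y ∈ ℝ^d. Let f : [0,T] × ℝ^d × ℝ^d → ℝ be continuously differentiable and satisfy the Vlasov equation in expanded form at every point of [0,T] × ℝ^d × ℝ^d. If f(0,x,v) ≥ 0 for all (x,v), then f(t,x,v) ≥ 0 for all (t,x,v) ∈ [0,T] × ℝ^d × ℝ^d. -/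
open MeasureTheory Real Set

/-!
Along a backward characteristic `γ` of the field `(x, v) ↦ (v, u(s, x) − v)` ending at `(t, x, v)`,
the Vlasov equation says that `s ↦ f(s, γ s)` solves `φ' = d φ`, so
`f(t, x, v) = exp(d (t − s)) f(s, γ s)` has the sign of `f` at the earlier time `s`. Since the field
grows only linearly, Picard–Lindelöf provides such characteristics over every time interval of
length at most `1/2`, and positivity is carried from time `0` to `T` in finitely many such steps.
-/

open scoped NNReal

theorem forall_mem_Icc_of_forall_step {P : ℝ → Prop} {T δ : ℝ} (hδ : 0 < δ) (h0 : P 0)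
    (hstep : ∀ s t, 0 ≤ s → s ≤ t → t ≤ T → t - s ≤ δ → P s → P t) :
    ∀ t ∈ Icc 0 T, P t := by
  suffices h : ∀ n : ℕ, ∀ t ∈ Icc 0 T, t ≤ n * δ → P t by
    obtain ⟨n, hn⟩ := exists_nat_ge (T / δ)
    exact fun t ht => h n t ht (ht.2.trans ((div_le_iff₀ hδ).1 hn))
  intro n
  induction n with
  | zero =>
    intro t ht htn
    rwa [le_antisymm (by simpa using htn) ht.1]
  | succ n ih =>
    intro t ht htn
    have hs : 0 ≤ max 0 (t - δ) := le_max_left _ _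
    have hst : max 0 (t - δ) ≤ t := max_le ht.1 (by linarith)
    have hδt : t - max 0 (t - δ) ≤ δ := by linarith [le_max_right 0 (t - δ)]
    refine hstep _ t hs hst ht.2 hδt (ih _ ⟨hs, hst.trans ht.2⟩ ?_)
    push_cast at htn
    exact max_le (by positivity) (by linarith)

theorem eq_exp_mul_of_hasDerivWithinAt {φ : ℝ → ℝ} {a b c : ℝ} (hab : a ≤ b)
    (hφ : ∀ s ∈ Icc a b, HasDerivWithinAt φ (c * φ s) (Icc a b) s) :
    φ b = exp (c * (b - a)) * φ a := by
  set g : ℝ → ℝ := fun s => exp (-(c * s)) * φ s with hg_def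
  have hg : ∀ s ∈ Icc a b, HasDerivWithinAt g 0 (Icc a b) s := fun s hs => by
    have hexp : HasDerivAt (fun s => exp (-(c * s))) (exp (-(c * s)) * -c) s := by
      simpa using ((hasDerivAt_id s).const_mul c).neg.exp
    exact (hexp.hasDerivWithinAt.fun_mul (hφ s hs)).congr_deriv (by ring)
  have hgab : g b = g a :=
    constant_of_has_deriv_right_zero (fun s hs => (hg s hs).continuousWithinAt)
      (fun s hs => (hg s (Ico_subset_Icc_self hs)).mono_of_mem_nhdsWithin
        (Icc_mem_nhdsGE_of_mem hs)) b ⟨hab, le_rfl⟩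
  have hφg : ∀ r, φ r = exp (c * r) * g r := fun r => by
    rw [hg_def, ← mul_assoc, ← exp_add, add_neg_cancel, exp_zero, one_mul]
  rw [hφg b, hgab, hg_def, ← mul_assoc, ← exp_add]
  ring_nf

section Characteristics

variable {E : Type*} [NormedAddCommGroup E]

theorem exists_hasDerivWithinAt_eq_of_norm_le_add_norm_sub [NormedSpace ℝ E] [CompleteSpace E]
    {G : ℝ → E → E} {a b M : ℝ} {L : ℝ≥0} {p₀ : E} (hab : a ≤ b) (hba : b - a ≤ 1 / 2)
    (hlip : ∀ s ∈ Icc a b, LipschitzWith L (G s)) (hcont : ∀ p, ContinuousOn (G · p) (Icc a b))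
    (hnorm : ∀ s ∈ Icc a b, ∀ p, ‖G s p‖ ≤ M + ‖p - p₀‖) :
    ∃ γ : ℝ → E, γ b = p₀ ∧ ∀ s ∈ Icc a b, HasDerivWithinAt γ (G s (γ s)) (Icc a b) s := by
  have hM : 0 ≤ M := (norm_nonneg _).trans (by simpa using hnorm a ⟨le_rfl, hab⟩ p₀)
  have hpl : IsPicardLindelof G (tmin := a) (tmax := b) ⟨b, hab, le_rfl⟩ p₀
      M.toNNReal 0 (2 * M).toNNReal L :=
    { lipschitzOnWith := fun s hs => (hlip s hs).lipschitzOnWith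
      continuousOn := fun p _ => hcont p
      norm_le := fun s hs p hp => by
        rw [Metric.mem_closedBall, dist_eq_norm, coe_toNNReal _ hM] at hp
        rw [coe_toNNReal _ (by positivity)]
        linarith [hnorm s hs p]
      mul_max_le := by
        simp only [coe_toNNReal _ hM, coe_toNNReal _ (by positivity : 0 ≤ 2 * M), sub_self,
          NNReal.coe_zero, sub_zero, max_eq_right (sub_nonneg.2 hab)]
        nlinarith }
  exact hpl.exists_eq_forall_mem_Icc_hasDerivWithinAt₀

def vlasovCharacteristicField (u : ℝ × E → E) (s : ℝ) (p : E × E) : E × E :=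
  (p.2, u (s, p.1) - p.2)

variable {u : ℝ × E → E}

theorem lipschitzWith_vlasovCharacteristicField {s : ℝ} {K : ℝ≥0}
    (hu : LipschitzWith K fun x => u (s, x)) :
    LipschitzWith (K + 1) (vlasovCharacteristicField u s) := by
  have h := LipschitzWith.prod_snd.prodMk ((hu.comp LipschitzWith.prod_fst).sub
    LipschitzWith.prod_snd)
  rwa [mul_one, max_eq_right le_add_self] at h

theorem norm_vlasovCharacteristicField_le {s C : ℝ} {p : E × E} (hu : ‖u (s, p.1)‖ ≤ C)
    (p₀ : E × E) :
    ‖vlasovCharacteristicField u s p‖ ≤ (C + ‖p₀.2‖) + ‖p - p₀‖ := by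
  have hp : ‖p.2‖ ≤ ‖p₀.2‖ + ‖p - p₀‖ := calc
    ‖p.2‖ ≤ ‖p₀.2‖ + ‖p.2 - p₀.2‖ := norm_le_insert' _ _
    _ ≤ ‖p₀.2‖ + ‖p - p₀‖ := by gcongr; exact norm_snd_le (p - p₀)
  show max ‖p.2‖ ‖u (s, p.1) - p.2‖ ≤ _
  exact max_le (by linarith [(norm_nonneg _).trans hu]) ((norm_sub_le _ _).trans (by linarith))

theorem continuousOn_vlasovCharacteristicField {S : Set ℝ} (hu : ContinuousOn u (S ×ˢ univ))
    (p : E × E) :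
    ContinuousOn (vlasovCharacteristicField u · p) S :=
  continuousOn_const.prodMk
    ((hu.comp (by fun_prop) fun _ hs => ⟨hs, mem_univ _⟩).sub continuousOn_const)

variable [NormedSpace ℝ E] [CompleteSpace E] {a b C : ℝ} {K : ℝ≥0}

theorem exists_vlasov_characteristic (hab : a ≤ b) (hba : b - a ≤ 1 / 2)
    (hu_cont : ContinuousOn u (Icc a b ×ˢ univ)) (hu_bdd : ∀ s ∈ Icc a b, ∀ x, ‖u (s, x)‖ ≤ C)
    (hu_lip : ∀ s ∈ Icc a b, LipschitzWith K fun x => u (s, x)) (p₀ : E × E) :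
    ∃ γ : ℝ → E × E, γ b = p₀ ∧
      ∀ s ∈ Icc a b, HasDerivWithinAt γ (vlasovCharacteristicField u s (γ s)) (Icc a b) s :=
  exists_hasDerivWithinAt_eq_of_norm_le_add_norm_sub hab hba
    (fun s hs => lipschitzWith_vlasovCharacteristicField (hu_lip s hs))
    (continuousOn_vlasovCharacteristicField hu_cont)
    (fun s hs _ => norm_vlasovCharacteristicField_le (hu_bdd s hs _) p₀)

theorem vlasov_nonneg_of_nonneg {f : ℝ × E × E → ℝ} {c : ℝ} (hab : a ≤ b) (hba : b - a ≤ 1 / 2)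
    (hu_cont : ContinuousOn u (Icc a b ×ˢ univ)) (hu_bdd : ∀ s ∈ Icc a b, ∀ x, ‖u (s, x)‖ ≤ C)
    (hu_lip : ∀ s ∈ Icc a b, LipschitzWith K fun x => u (s, x)) (hf : Differentiable ℝ f)
    (hVlasov : ∀ s ∈ Icc a b, ∀ x v, fderiv ℝ f (s, x, v) (1, v, u (s, x) - v) = c * f (s, x, v))
    (ha : ∀ x v, 0 ≤ f (a, x, v)) (x v : E) : 0 ≤ f (b, x, v) := by
  obtain ⟨γ, hγb, hγ⟩ := exists_vlasov_characteristic hab hba hu_cont hu_bdd hu_lip (x, v)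
  have hφ : ∀ s ∈ Icc a b, HasDerivWithinAt (fun s => f (s, γ s)) (c * f (s, γ s)) (Icc a b) s :=
    fun s hs => by
      rw [← hVlasov s hs]
      exact (hf _).hasFDerivAt.comp_hasDerivWithinAt s
        ((hasDerivWithinAt_id s _).prodMk (hγ s hs))
  calc 0 ≤ exp (c * (b - a)) * f (a, γ a) := mul_nonneg (exp_pos _).le (ha _ _)
    _ = f (b, x, v) := by rw [← eq_exp_mul_of_hasDerivWithinAt hab hφ, hγb]

end Characteristics

theorem positivity_preservation_vlasov_general
    (d : ℕ) (T : ℝ)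
    (u : ℝ × EuclideanSpace ℝ (Fin d) → EuclideanSpace ℝ (Fin d))
    (f : ℝ × EuclideanSpace ℝ (Fin d) × EuclideanSpace ℝ (Fin d) → ℝ)
    (hu_cont : ContinuousOn u (Icc 0 T ×ˢ univ))
    (hu_bdd : ∃ C : ℝ, ∀ t ∈ Icc (0:ℝ) T, ∀ x : EuclideanSpace ℝ (Fin d), ‖u (t, x)‖ ≤ C)
    (K : ℝ)
    (hu_lip : ∀ t ∈ Icc (0:ℝ) T, ∀ x y : EuclideanSpace ℝ (Fin d),
      ‖u (t, x) - u (t, y)‖ ≤ K * ‖x - y‖)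
    (hf_smooth : ContDiff ℝ 1 f)
    (hVlasov : ∀ (t : ℝ), t ∈ Icc 0 T → ∀ (x v : EuclideanSpace ℝ (Fin d)),
      fderiv ℝ f (t, x, v) (1, v, u (t, x) - v) = (d : ℝ) * f (t, x, v))
    (hf0 : ∀ x v : EuclideanSpace ℝ (Fin d), 0 ≤ f (0, x, v)) :
    ∀ t ∈ Icc (0:ℝ) T, ∀ x v : EuclideanSpace ℝ (Fin d), 0 ≤ f (t, x, v) := by
  obtain ⟨C, hC⟩ := hu_bdd
  have hu_lipschitzWith : ∀ t ∈ Icc (0:ℝ) T, LipschitzWith K.toNNReal fun x => u (t, x) :=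
    fun t ht => LipschitzWith.of_dist_le_mul fun x y => by
      simpa only [dist_eq_norm] using (hu_lip t ht x y).trans
        (mul_le_mul_of_nonneg_right (le_coe_toNNReal K) (norm_nonneg _))
  refine forall_mem_Icc_of_forall_step one_half_pos hf0 fun s t hs hst htT hts hpos => ?_
  have hsub : Icc s t ⊆ Icc 0 T := Icc_subset_Icc hs htT
  exact vlasov_nonneg_of_nonneg hst hts (hu_cont.mono (prod_mono hsub subset_rfl))
    (fun r hr => hC r (hsub hr)) (fun r hr => hu_lipschitzWith r (hsub hr))
    (hf_smooth.differentiable one_ne_zero) (fun r hr => hVlasov r (hsub hr)) hpos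

/-- **Positivity preservation for classical solutions of the Vlasov equation.**
Let `d ≥ 1`, `T > 0`, `u : [0,T] × ℝ^d → ℝ^d` continuous and bounded, and Lipschitz in the
`x`-variable with constant `K > 0` uniformly in `t ∈ [0,T]`.  Let `f` be `C¹` and satisfy the
Vlasov equation in expanded form
`∂_t f + v·∇_x f + (u − v)·∇_v f − d f = 0`
(equivalently, the directional derivative of `f` at `(t,x,v)` in the direction
`(1, v, u(t,x) − v)` equals `d · f(t,x,v)`) at every point of `[0,T] × ℝ^d × ℝ^d`.
If `f(0,·,·) ≥ 0`, then `f(t,·,·) ≥ 0` for every `t ∈ [0,T]`. -/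
theorem positivity_preservation_vlasov
    (d : ℕ) (hd : 1 ≤ d) (T : ℝ) (hT : 0 < T)
    (u : ℝ × EuclideanSpace ℝ (Fin d) → EuclideanSpace ℝ (Fin d))
    (f : ℝ × EuclideanSpace ℝ (Fin d) × EuclideanSpace ℝ (Fin d) → ℝ)
    (hu_cont : ContinuousOn u (Icc 0 T ×ˢ univ))
    (hu_bdd : ∃ C : ℝ, ∀ t ∈ Icc (0:ℝ) T, ∀ x : EuclideanSpace ℝ (Fin d), ‖u (t, x)‖ ≤ C)
    (K : ℝ) (hK : 0 < K)
    (hu_lip : ∀ t ∈ Icc (0:ℝ) T, ∀ x y : EuclideanSpace ℝ (Fin d),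
      ‖u (t, x) - u (t, y)‖ ≤ K * ‖x - y‖)
    (hf_smooth : ContDiff ℝ 1 f)
    (hVlasov : ∀ (t : ℝ), t ∈ Icc 0 T → ∀ (x v : EuclideanSpace ℝ (Fin d)),
      fderiv ℝ f (t, x, v) (1, v, u (t, x) - v) = (d : ℝ) * f (t, x, v))
    (hf0 : ∀ x v : EuclideanSpace ℝ (Fin d), 0 ≤ f (0, x, v)) :
    ∀ t ∈ Icc (0:ℝ) T, ∀ x v : EuclideanSpace ℝ (Fin d), 0 ≤ f (t, x, v) :=
  positivity_preservation_vlasov_general d T u f hu_cont hu_bdd K hu_lip hf_smooth hVlasov hf0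
end

section
/- Velocity-moment interpolation inequality for the local momentum: Let d ≥ 1 be an integer and let p > 1 be a real number. There exists a constant C depending only on d and p such that for every A > 0 and every measurable function g : ℝ^d → ℝ with 0 ≤ g(v) ≤ A for all v, one has ∫_{ℝ^d} ‖v‖ g(v) dv ≤ C · A^{(p−1)/(p+d)} · (∫_{ℝ^d} ‖v‖^p g(v) dv)^{(d+1)/(p+d)}. -/
open MeasureTheory Real Set ENNReal Metric Module

/-!
Split the integral at a radius `R`. On the ball `‖v‖ g(v) ≤ R A`, which contributes
`|B₁| R^{d+1} A`; outside it `‖v‖ ≤ R^{1-p} ‖v‖^p`, which contributes `R^{1-p} M` with `M` the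
`p`-th moment. Choosing `R^{p+d} = M / A` makes both contributions equal to
`A^{(p-1)/(p+d)} M^{(d+1)/(p+d)}`.
-/

theorem exists_rpow_mul_eq_rpow_mul_rpow {a b A m : ℝ} (hab : 0 < a + b) (hA : 0 < A)
    (hm : 0 < m) :
    ∃ R > 0, R ^ a * A = A ^ (b / (a + b)) * m ^ (a / (a + b)) ∧
      R ^ (-b) * m = A ^ (b / (a + b)) * m ^ (a / (a + b)) := by
  set R := (m / A) ^ (1 / (a + b))
  have hR : 0 < R := rpow_pos_of_pos (div_pos hm hA) _
  have hRab : R ^ (a + b) * A = m := by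
    rw [← rpow_mul (div_pos hm hA).le, one_div_mul_cancel hab.ne', Real.rpow_one,
      div_mul_cancel₀ _ hA.ne']
  have hRa : R ^ a * A = A ^ (b / (a + b)) * m ^ (a / (a + b)) := by
    have hAb : A ^ (b / (a + b)) = A / A ^ (a / (a + b)) := by
      rw [show b / (a + b) = 1 - a / (a + b) by field_simp; ring, rpow_sub hA, Real.rpow_one]
    rw [← rpow_mul (div_pos hm hA).le, one_div_mul_eq_div, div_rpow hm.le hA.le, hAb]
    ring
  refine ⟨R, hR, hRa, ?_⟩
  calc R ^ (-b) * m = R ^ (-b) * (R ^ (a + b) * A) := by rw [hRab]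
    _ = R ^ a * A := by rw [← mul_assoc, ← rpow_add hR, show -b + (a + b) = a by ring]
    _ = _ := hRa

section

variable {E : Type*} [NormedAddCommGroup E] [MeasurableSpace E] [OpensMeasurableSpace E]

theorem lintegral_norm_mul_eq_zero_of_lintegral_rpow_norm_mul_eq_zero
    {μ : Measure E} {g : E → ℝ} {p : ℝ} (hg : Measurable g)
    (h : ∫⁻ v, ENNReal.ofReal (‖v‖ ^ p * g v) ∂μ = 0) :
    ∫⁻ v, ENNReal.ofReal (‖v‖ * g v) ∂μ = 0 := by
  rw [lintegral_eq_zero_iff' (by fun_prop)] at h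
  rw [lintegral_congr_ae (g := fun _ => 0) ?_, lintegral_zero]
  filter_upwards [h] with v hv
  simp only [Pi.zero_apply, ENNReal.ofReal_eq_zero] at hv ⊢
  rcases (norm_nonneg v).eq_or_lt with hv0 | hv0
  · simp [← hv0]
  · exact mul_nonpos_of_nonneg_of_nonpos hv0.le
      (nonpos_of_mul_nonpos_right hv (rpow_pos_of_pos hv0 p))

theorem setLIntegral_closedBall_norm_mul_le (μ : Measure E) {g : E → ℝ} {A R : ℝ}
    (hg0 : ∀ v, 0 ≤ g v) (hgA : ∀ v, g v ≤ A) (hR : 0 ≤ R) :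
    ∫⁻ v in closedBall 0 R, ENNReal.ofReal (‖v‖ * g v) ∂μ
      ≤ ENNReal.ofReal (R * A) * μ (closedBall 0 R) :=
  calc _ ≤ ∫⁻ _ in closedBall 0 R, ENNReal.ofReal (R * A) ∂μ :=
        setLIntegral_mono' measurableSet_closedBall fun v hv => ENNReal.ofReal_le_ofReal <|
          mul_le_mul (mem_closedBall_zero_iff.mp hv) (hgA v) (hg0 v) hR
    _ = _ := setLIntegral_const _ _

theorem setLIntegral_compl_closedBall_norm_mul_le (μ : Measure E) {g : E → ℝ} {p R : ℝ}
    (hp : 1 ≤ p) (hR : 0 < R) (hg0 : ∀ v, 0 ≤ g v) :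
    ∫⁻ v in (closedBall 0 R)ᶜ, ENNReal.ofReal (‖v‖ * g v) ∂μ
      ≤ ENNReal.ofReal (R ^ (1 - p)) * ∫⁻ v, ENNReal.ofReal (‖v‖ ^ p * g v) ∂μ :=
  calc _ ≤ ∫⁻ v in (closedBall 0 R)ᶜ,
          ENNReal.ofReal (R ^ (1 - p)) * ENNReal.ofReal (‖v‖ ^ p * g v) ∂μ := by
        refine setLIntegral_mono' measurableSet_closedBall.compl fun v hv => ?_
        have hRv : R < ‖v‖ := by simpa using hv
        have hv0 : 0 < ‖v‖ := hR.trans hRv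
        rw [← ENNReal.ofReal_mul (rpow_nonneg hR.le _)]
        refine ENNReal.ofReal_le_ofReal ?_
        calc ‖v‖ * g v = ‖v‖ ^ (1 - p) * (‖v‖ ^ p * g v) := by
              rw [← mul_assoc, ← rpow_add hv0, sub_add_cancel, Real.rpow_one]
          _ ≤ R ^ (1 - p) * (‖v‖ ^ p * g v) :=
              mul_le_mul_of_nonneg_right (rpow_le_rpow_of_nonpos hR hRv.le (by linarith))
                (mul_nonneg (rpow_nonneg hv0.le _) (hg0 v))
    _ = ENNReal.ofReal (R ^ (1 - p)) *
          ∫⁻ v in (closedBall 0 R)ᶜ, ENNReal.ofReal (‖v‖ ^ p * g v) ∂μ :=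
        lintegral_const_mul' _ _ ENNReal.ofReal_ne_top
    _ ≤ _ := mul_le_mul_right (setLIntegral_le_lintegral _ _) _

end

section

variable {E : Type*} [NormedAddCommGroup E] [NormedSpace ℝ E] [FiniteDimensional ℝ E]
  [MeasurableSpace E] [BorelSpace E] (μ : Measure E) [μ.IsAddHaarMeasure]

theorem lintegral_norm_mul_le_of_radius {g : E → ℝ} {A p R : ℝ} (hg0 : ∀ v, 0 ≤ g v)
    (hgA : ∀ v, g v ≤ A) (hp : 1 ≤ p) (hR : 0 < R) :
    ∫⁻ v, ENNReal.ofReal (‖v‖ * g v) ∂μ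
      ≤ μ (ball 0 1) * ENNReal.ofReal (R ^ ((finrank ℝ E : ℝ) + 1) * A)
        + ENNReal.ofReal (R ^ (1 - p)) * ∫⁻ v, ENNReal.ofReal (‖v‖ ^ p * g v) ∂μ := by
  rw [← lintegral_add_compl _ (measurableSet_closedBall (x := 0) (ε := R))]
  gcongr ?_ + ?_
  · calc _ ≤ _ := setLIntegral_closedBall_norm_mul_le μ hg0 hgA hR.le
      _ = _ := by
        rw [Measure.addHaar_closedBall μ 0 hR.le, rpow_add_one hR.ne', Real.rpow_natCast,
          mul_assoc (R ^ finrank ℝ E), ENNReal.ofReal_mul (pow_nonneg hR.le _)]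
        ring
  · exact setLIntegral_compl_closedBall_norm_mul_le μ hp hR hg0

theorem lintegral_norm_mul_le_rpow_mul_lintegral_rpow_norm_mul {g : E → ℝ} {A p : ℝ}
    (hA : 0 < A) (hp : 1 ≤ p) (hg : Measurable g) (hg0 : ∀ v, 0 ≤ g v)
    (hgA : ∀ v, g v ≤ A) :
    ∫⁻ v, ENNReal.ofReal (‖v‖ * g v) ∂μ
      ≤ (μ (ball 0 1) + 1) * ENNReal.ofReal A ^ ((p - 1) / (p + finrank ℝ E))
        * (∫⁻ v, ENNReal.ofReal (‖v‖ ^ p * g v) ∂μ)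
          ^ (((finrank ℝ E : ℝ) + 1) / (p + finrank ℝ E)) := by
  set d : ℝ := (finrank ℝ E : ℝ)
  set M := ∫⁻ v, ENNReal.ofReal (‖v‖ ^ p * g v) ∂μ
  rcases eq_or_ne M 0 with hM0 | hM0
  · rw [lintegral_norm_mul_eq_zero_of_lintegral_rpow_norm_mul_eq_zero hg hM0]
    exact zero_le
  rcases eq_or_ne M ⊤ with hMtop | hMtop
  · rw [hMtop, top_rpow_of_pos (by positivity), mul_top]
    · exact le_top
    · exact mul_ne_zero (by simp) (rpow_pos (ENNReal.ofReal_pos.mpr hA) ofReal_ne_top).ne'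
  have hm : 0 < M.toReal := toReal_pos hM0 hMtop
  obtain ⟨R, hR, hRa, hRb⟩ :=
    exists_rpow_mul_eq_rpow_mul_rpow (a := d + 1) (b := p - 1) (by positivity) hA hm
  rw [show d + 1 + (p - 1) = p + d by ring] at hRa hRb
  rw [neg_sub] at hRb
  calc _ ≤ μ (ball 0 1) * ENNReal.ofReal (R ^ (d + 1) * A)
        + ENNReal.ofReal (R ^ (1 - p)) * M := lintegral_norm_mul_le_of_radius μ hg0 hgA hp hR
    _ = (μ (ball 0 1) + 1) *
          ENNReal.ofReal (A ^ ((p - 1) / (p + d)) * M.toReal ^ ((d + 1) / (p + d))) := by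
        rw [← ofReal_toReal hMtop, ← ENNReal.ofReal_mul (rpow_nonneg hR.le _),
          toReal_ofReal hm.le, hRa, hRb]
        ring
    _ = _ := by
        rw [ENNReal.ofReal_mul (by positivity), ← ofReal_rpow_of_pos hA,
          ← ofReal_rpow_of_pos hm, ofReal_toReal hMtop, mul_assoc]

end

theorem momentum_moment_interpolation_general
    (d : ℕ) (p : ℝ) (hp : 1 < p) :
    ∃ C : ℝ, 0 < C ∧
      ∀ (A : ℝ), 0 < A → ∀ g : EuclideanSpace ℝ (Fin d) → ℝ, Measurable g →
        (∀ v, 0 ≤ g v) → (∀ v, g v ≤ A) →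
        (∫⁻ v : EuclideanSpace ℝ (Fin d), ENNReal.ofReal (‖v‖ * g v))
          ≤ ENNReal.ofReal C * ENNReal.ofReal A ^ ((p - 1) / (p + d))
            * (∫⁻ v : EuclideanSpace ℝ (Fin d),
                ENNReal.ofReal (‖v‖ ^ p * g v)) ^ (((d : ℝ) + 1) / (p + d)) := by
  have hball : volume (ball (0 : EuclideanSpace ℝ (Fin d)) 1) ≠ ⊤ := measure_ball_lt_top.ne
  refine ⟨(volume (ball (0 : EuclideanSpace ℝ (Fin d)) 1)).toReal + 1, by positivity,
    fun A hA g hg hg0 hgA => ?_⟩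
  rw [ENNReal.ofReal_add toReal_nonneg zero_le_one, ofReal_toReal hball, ENNReal.ofReal_one]
  simpa only [finrank_euclideanSpace_fin] using
    lintegral_norm_mul_le_rpow_mul_lintegral_rpow_norm_mul volume hA hp.le hg hg0 hgA

/-- **Velocity-moment interpolation inequality for the local momentum.**
For every dimension `d ≥ 1` and real `p > 1` there is a constant `C = C(d,p)` such that
for every `A > 0` and every measurable `g : ℝ^d → ℝ` with `0 ≤ g ≤ A`,
`∫ ‖v‖ g(v) dv ≤ C · A^{(p−1)/(p+d)} · (∫ ‖v‖^p g(v) dv)^{(d+1)/(p+d)}`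
(Lebesgue upper integrals, possibly infinite). -/
theorem momentum_moment_interpolation
    (d : ℕ) (hd : 1 ≤ d) (p : ℝ) (hp : 1 < p) :
    ∃ C : ℝ, 0 < C ∧
      ∀ (A : ℝ), 0 < A → ∀ g : EuclideanSpace ℝ (Fin d) → ℝ, Measurable g →
        (∀ v, 0 ≤ g v) → (∀ v, g v ≤ A) →
        (∫⁻ v : EuclideanSpace ℝ (Fin d), ENNReal.ofReal (‖v‖ * g v))
          ≤ ENNReal.ofReal C * ENNReal.ofReal A ^ ((p - 1) / (p + d))
            * (∫⁻ v : EuclideanSpace ℝ (Fin d),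
                ENNReal.ofReal (‖v‖ ^ p * g v)) ^ (((d : ℝ) + 1) / (p + d)) :=
  momentum_moment_interpolation_general d p hp
end

section
/- Nonlinear Grönwall inequality used in the error analysis: Let T > 0, C ≥ 0, b ≥ 0 and a > 0. Let Ψ : [0,T] → ℝ be differentiable with Ψ(0) = a, Ψ(t) > 0 for all t ∈ [0,T], and Ψ'(t) ≤ C(Ψ(t) + b·Ψ(t)²) for all t ∈ [0,T]. Then for every t ∈ [0,T], Ψ(t)·(1 − a·b·(e^{Ct} − 1)) ≤ a·e^{Ct}. In particular, if a·b·(e^{CT} − 1) < 1 then Ψ(t) ≤ a·e^{CT}/(1 − a·b·(e^{CT} − 1)) for all t ∈ [0,T]. -/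
open Real Set

/-! The substitution `u = 1/Ψ` turns the Riccati-type inequality `Ψ' ≤ C(Ψ + bΨ²)` into the
linear one `u' ≥ -C(u + b)`, so `t ↦ e^{Ct}(1/Ψ(t) + b)` is nondecreasing. Comparing its values
at `0` and `t` and clearing denominators gives the bound. -/

lemma hasDerivAt_exp_mul_inv_add {Ψ : ℝ → ℝ} {Ψ' C b t : ℝ} (hΨ : HasDerivAt Ψ Ψ' t)
    (hΨt : Ψ t ≠ 0) :
    HasDerivAt (fun s => exp (C * s) * ((Ψ s)⁻¹ + b))
      (exp (C * t) * (C * ((Ψ t)⁻¹ + b) - Ψ' / Ψ t ^ 2)) t := by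
  have hexp : HasDerivAt (fun s => exp (C * s)) (exp (C * t) * C) t := by
    simpa using ((hasDerivAt_id t).const_mul C).exp
  exact (hexp.mul ((hΨ.fun_inv hΨt).add_const b)).congr_deriv (by ring)

lemma monotoneOn_exp_mul_inv_add {Ψ : ℝ → ℝ} {C b : ℝ} {s : Set ℝ} (hs : Convex ℝ s)
    (hpos : ∀ t ∈ s, 0 < Ψ t) (hdiff : ∀ t ∈ s, DifferentiableAt ℝ Ψ t)
    (hderiv : ∀ t ∈ s, deriv Ψ t ≤ C * (Ψ t + b * Ψ t ^ 2)) :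
    MonotoneOn (fun t => exp (C * t) * ((Ψ t)⁻¹ + b)) s := by
  have hg : ∀ t ∈ s, HasDerivAt (fun s => exp (C * s) * ((Ψ s)⁻¹ + b))
      (exp (C * t) * (C * ((Ψ t)⁻¹ + b) - deriv Ψ t / Ψ t ^ 2)) t := fun t ht =>
    hasDerivAt_exp_mul_inv_add (hdiff t ht).hasDerivAt (hpos t ht).ne'
  refine monotoneOn_of_deriv_nonneg hs (fun t ht => (hg t ht).continuousAt.continuousWithinAt)
    (fun t ht => (hg t (interior_subset ht)).differentiableAt.differentiableWithinAt)
    (fun t ht => ?_)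
  have ht := interior_subset ht
  rw [(hg t ht).deriv]
  have hΨt := hpos t ht
  have hquot : deriv Ψ t / Ψ t ^ 2 ≤ C * ((Ψ t)⁻¹ + b) := by
    rw [div_le_iff₀ (by positivity)]
    exact (hderiv t ht).trans_eq (by field_simp)
  exact mul_nonneg (exp_pos _).le (sub_nonneg.2 hquot)

lemma mul_one_sub_le_of_inv_add_le {x y b e : ℝ} (hx : 0 < x) (hy : 0 < y)
    (h : x⁻¹ + b ≤ e * (y⁻¹ + b)) : y * (1 - x * b * (e - 1)) ≤ x * e := by
  have := mul_le_mul_of_nonneg_left h (mul_pos hx hy).le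
  field_simp at this
  linarith

theorem nonlinear_gronwall_general
    (T C b a : ℝ) (hC : 0 ≤ C) (hb : 0 ≤ b)
    (Ψ : ℝ → ℝ)
    (hΨ0 : Ψ 0 = a)
    (hΨpos : ∀ t ∈ Icc (0:ℝ) T, 0 < Ψ t)
    (hΨdiff : ∀ t ∈ Icc (0:ℝ) T, DifferentiableAt ℝ Ψ t)
    (hΨderiv : ∀ t ∈ Icc (0:ℝ) T, deriv Ψ t ≤ C * (Ψ t + b * Ψ t ^ 2)) :
    (∀ t ∈ Icc (0:ℝ) T,
        Ψ t * (1 - a * b * (Real.exp (C * t) - 1)) ≤ a * Real.exp (C * t)) ∧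
    (a * b * (Real.exp (C * T) - 1) < 1 →
      ∀ t ∈ Icc (0:ℝ) T,
        Ψ t ≤ a * Real.exp (C * T) / (1 - a * b * (Real.exp (C * T) - 1))) := by
  have hmono := monotoneOn_exp_mul_inv_add (convex_Icc 0 T) hΨpos hΨdiff hΨderiv
  have bound : ∀ t ∈ Icc (0:ℝ) T,
      Ψ t * (1 - a * b * (exp (C * t) - 1)) ≤ a * exp (C * t) := by
    intro t ht
    have h0 : (0:ℝ) ∈ Icc 0 T := ⟨le_rfl, ht.1.trans ht.2⟩
    rw [← hΨ0]
    refine mul_one_sub_le_of_inv_add_le (hΨpos 0 h0) (hΨpos t ht) ?_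
    simpa using hmono h0 ht ht.1
  refine ⟨bound, fun hsmall t ht => ?_⟩
  have ha : 0 < a := hΨ0 ▸ hΨpos 0 ⟨le_rfl, ht.1.trans ht.2⟩
  have hab : 0 ≤ a * b := mul_nonneg ha.le hb
  have hexp : exp (C * t) ≤ exp (C * T) := by gcongr; exact ht.2
  rw [le_div_iff₀ (sub_pos.2 hsmall)]
  calc Ψ t * (1 - a * b * (exp (C * T) - 1))
      ≤ Ψ t * (1 - a * b * (exp (C * t) - 1)) := by
        gcongr
        exact (hΨpos t ht).le
    _ ≤ a * exp (C * t) := bound t ht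
    _ ≤ a * exp (C * T) := by gcongr

/-- **Nonlinear Grönwall inequality used in the error analysis.**
Let `T > 0`, `C ≥ 0`, `b ≥ 0`, `a > 0`, and let `Ψ : [0,T] → ℝ` be differentiable with
`Ψ(0) = a`, `Ψ > 0` on `[0,T]`, and `Ψ' ≤ C(Ψ + bΨ²)` on `[0,T]`.  Then for every
`t ∈ [0,T]`, `Ψ(t)(1 − a b (e^{Ct} − 1)) ≤ a e^{Ct}`; in particular, if
`a b (e^{CT} − 1) < 1` then `Ψ(t) ≤ a e^{CT} / (1 − a b (e^{CT} − 1))` on `[0,T]`. -/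
theorem nonlinear_gronwall
    (T C b a : ℝ) (hT : 0 < T) (hC : 0 ≤ C) (hb : 0 ≤ b) (ha : 0 < a)
    (Ψ : ℝ → ℝ)
    (hΨ0 : Ψ 0 = a)
    (hΨpos : ∀ t ∈ Icc (0:ℝ) T, 0 < Ψ t)
    (hΨdiff : ∀ t ∈ Icc (0:ℝ) T, DifferentiableAt ℝ Ψ t)
    (hΨderiv : ∀ t ∈ Icc (0:ℝ) T, deriv Ψ t ≤ C * (Ψ t + b * Ψ t ^ 2)) :
    (∀ t ∈ Icc (0:ℝ) T,
        Ψ t * (1 - a * b * (Real.exp (C * t) - 1)) ≤ a * Real.exp (C * t)) ∧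
    (a * b * (Real.exp (C * T) - 1) < 1 →
      ∀ t ∈ Icc (0:ℝ) T,
        Ψ t ≤ a * Real.exp (C * T) / (1 - a * b * (Real.exp (C * T) - 1))) :=
  nonlinear_gronwall_general T C b a hC hb Ψ hΨ0 hΨpos hΨdiff hΨderiv
end
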